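/- Assume γ is non-oscillating at O, and reparameterize γ near its endpoint by r = |γ(s)| (this is possible since s ↦ |γ(s)| is eventually strictly decreasing to 0), so that for r ∈ (0,r₀) the point γ(r) lies on the trajectory and |γ(r)| = r. Let a and b be real analytic on U such that b(γ(r)) ≠ 0 and ⟨∇f(γ(r)), γ(r)⟩ ≠ 0 for all r ∈ (0,r₀), and set v(r) = a(γ(r))/b(γ(r)). If v is bounded on (0,r₀), then r·v'(r) → 0 as r → 0⁺. -/

import Mathlib

/-!
Along the reparameterized trajectory, `γ'(r) = (r / ⟪∇f, γ⟫) ∇f` and `‖γ r‖ = r`, so the operator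
`r d/dr` sends a quotient `α(γ r) / β(γ r)` of analytic functions to another quotient of analytic
functions, `radialDerivNum ∇f α β / radialDerivDen ∇f β`. Thus `q(r) = r v'(r)` is such a quotient,
and so is `r q'(r)`; its sign is the sign of an analytic function along the trajectory, which by
non-oscillation and the intermediate value theorem is eventually constant. Hence `q` is eventually
monotone. If `q` did not tend to `0`, it would eventually stay `≥ c` or `≤ -c` for some `c > 0`, and
then `v` would grow like `c |log r|`, contradicting its boundedness.
-/

open scoped RealInnerProductSpace Topology
open Filter Set

theorem exists_monotoneOn_Ioo_of_eventually_hasDerivAt_nonneg {q q' : ℝ → ℝ} {a : ℝ}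
    (h : ∀ᶠ t in 𝓝[>] a, HasDerivAt q (q' t) t ∧ 0 ≤ q' t) :
    ∃ δ > a, MonotoneOn q (Ioo a δ) := by
  obtain ⟨δ, hδ, hsub⟩ := mem_nhdsGT_iff_exists_Ioo_subset.1 h
  refine ⟨δ, hδ, monotoneOn_of_hasDerivWithinAt_nonneg (f' := q') (convex_Ioo a δ)
    (fun t ht => (hsub ht).1.continuousAt.continuousWithinAt) ?_ ?_⟩ <;>
  rw [interior_Ioo]
  · exact fun t ht => (hsub ht).1.hasDerivWithinAt
  · exact fun t ht => (hsub ht).2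

theorem MonotoneOn.eventually_nhdsGT_le_of_frequently {q : ℝ → ℝ} {a δ c : ℝ} (hδ : a < δ)
    (hq : MonotoneOn q (Ioo a δ)) (h : ∃ᶠ t in 𝓝[>] a, q t ≤ c) :
    ∀ᶠ t in 𝓝[>] a, q t ≤ c := by
  obtain ⟨t₁, hqt₁, ht₁⟩ := (h.and_eventually (Ioo_mem_nhdsGT hδ)).exists
  filter_upwards [Ioo_mem_nhdsGT ht₁.1] with t ht
  exact (hq ⟨ht.1, ht.2.trans ht₁.2⟩ ht₁ ht.2.le).trans hqt₁

theorem tendsto_atBot_nhdsGT_zero_of_le_mul_deriv {v v' : ℝ → ℝ} {c : ℝ} (hc : 0 < c)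
    (h : ∀ᶠ t in 𝓝[>] 0, HasDerivAt v (v' t) t ∧ c ≤ t * v' t) :
    Tendsto v (𝓝[>] 0) atBot := by
  have hψ : ∀ᶠ t in 𝓝[>] 0, HasDerivAt (fun t => v t - c * Real.log t) (v' t - c * t⁻¹) t ∧
      0 ≤ v' t - c * t⁻¹ := by
    filter_upwards [h, self_mem_nhdsWithin] with t ⟨hv, hle⟩ (ht : 0 < t)
    refine ⟨hv.sub ((Real.hasDerivAt_log ht.ne').const_mul c), ?_⟩
    rw [sub_nonneg, ← div_eq_mul_inv, div_le_iff₀' ht]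
    exact hle
  obtain ⟨δ, hδ, hmono⟩ := exists_monotoneOn_Ioo_of_eventually_hasDerivAt_nonneg hψ
  set y := δ / 2
  have hy : y ∈ Ioo 0 δ := ⟨half_pos hδ, half_lt_self hδ⟩
  refine tendsto_atBot_mono' _ ?_ (tendsto_atBot_add_const_left _ (v y - c * Real.log y)
    (Real.tendsto_log_nhdsGT_zero.const_mul_atBot hc))
  filter_upwards [Ioo_mem_nhdsGT hy.1] with t ht
  have : v t - c * Real.log t ≤ v y - c * Real.log y :=
    hmono ⟨ht.1, ht.2.trans hy.2⟩ hy ht.2.le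
  linarith

theorem not_eventually_le_mul_deriv_of_abs_le {v v' : ℝ → ℝ} {c M : ℝ} (hc : 0 < c)
    (hv : ∀ᶠ t in 𝓝[>] 0, HasDerivAt v (v' t) t) (hM : ∀ᶠ t in 𝓝[>] 0, |v t| ≤ M) :
    ¬ ∀ᶠ t in 𝓝[>] 0, c ≤ t * v' t := fun hle => by
  obtain ⟨t, hlt, hle⟩ := (((tendsto_atBot_nhdsGT_zero_of_le_mul_deriv hc (hv.and hle)).eventually
    (eventually_lt_atBot (-M))).and hM).exists
  linarith [neg_abs_le (v t)]

theorem MonotoneOn.tendsto_nhdsGT_zero_of_eq_mul_deriv {v v' q : ℝ → ℝ} {δ M : ℝ}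
    (hmono : MonotoneOn q (Ioo 0 δ)) (hδ : 0 < δ) (hv : ∀ᶠ t in 𝓝[>] 0, HasDerivAt v (v' t) t)
    (hM : ∀ᶠ t in 𝓝[>] 0, |v t| ≤ M) (hq : ∀ᶠ t in 𝓝[>] 0, q t = t * v' t) :
    Tendsto q (𝓝[>] 0) (𝓝 0) := by
  rw [tendsto_order]
  refine ⟨fun c hc => ?_, fun c hc => ?_⟩
  · by_contra hlt
    simp only [not_eventually, not_lt] at hlt
    refine not_eventually_le_mul_deriv_of_abs_le (v := -v) (v' := -v') (neg_pos.2 hc)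
      (hv.mono fun t ht => ht.neg) (by simpa using hM) ?_
    filter_upwards [hmono.eventually_nhdsGT_le_of_frequently hδ hlt, hq] with t ht hqt
    simp only [Pi.neg_apply, mul_neg]
    linarith
  · have hfreq : ∃ᶠ t in 𝓝[>] 0, q t ≤ c / 2 := by
      by_contra hgt
      rw [not_frequently] at hgt
      refine not_eventually_le_mul_deriv_of_abs_le (half_pos hc) hv hM ?_
      filter_upwards [hgt, hq] with t ht hqt
      linarith [not_le.1 ht]
    filter_upwards [hmono.eventually_nhdsGT_le_of_frequently hδ hfreq] with t ht
    linarith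

theorem tendsto_mul_deriv_nhdsGT_zero_of_eventually_deriv_sign {v v' q q' : ℝ → ℝ} {M : ℝ}
    (hv : ∀ᶠ t in 𝓝[>] 0, HasDerivAt v (v' t) t) (hM : ∀ᶠ t in 𝓝[>] 0, |v t| ≤ M)
    (hq : ∀ᶠ t in 𝓝[>] 0, q t = t * v' t) (hq' : ∀ᶠ t in 𝓝[>] 0, HasDerivAt q (q' t) t)
    (hsign : (∀ᶠ t in 𝓝[>] 0, 0 ≤ q' t) ∨ ∀ᶠ t in 𝓝[>] 0, q' t ≤ 0) :
    Tendsto (fun t => t * deriv v t) (𝓝[>] 0) (𝓝 0) := by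
  suffices Tendsto q (𝓝[>] 0) (𝓝 0) from this.congr' <| by
    filter_upwards [hv, hq] with t hvt hqt
    rw [hqt, hvt.deriv]
  rcases hsign with hnonneg | hnonpos
  · obtain ⟨δ, hδ, hmono⟩ :=
      exists_monotoneOn_Ioo_of_eventually_hasDerivAt_nonneg (hq'.and hnonneg)
    exact hmono.tendsto_nhdsGT_zero_of_eq_mul_deriv hδ hv hM hq
  · obtain ⟨δ, hδ, hmono⟩ := exists_monotoneOn_Ioo_of_eventually_hasDerivAt_nonneg
      (q := -q) (q' := -q') ((hq'.and hnonpos).mono fun t ht => ⟨ht.1.neg, neg_nonneg.2 ht.2⟩)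
    have := hmono.tendsto_nhdsGT_zero_of_eq_mul_deriv (v := -v) (v' := -v') hδ
      (hv.mono fun t ht => ht.neg) (by simpa using hM) (hq.mono fun t ht => by simp [ht])
    simpa using this.neg

theorem eventually_nonneg_or_nonpos_of_continuousAt {p : ℝ → ℝ} {a : ℝ}
    (hcont : ∀ᶠ t in 𝓝[>] a, ContinuousAt p t)
    (hosc : (∀ᶠ t in 𝓝[>] a, p t = 0) ∨ ∀ᶠ t in 𝓝[>] a, p t ≠ 0) :
    (∀ᶠ t in 𝓝[>] a, 0 ≤ p t) ∨ ∀ᶠ t in 𝓝[>] a, p t ≤ 0 := by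
  rcases hosc with hzero | hne
  · exact Or.inl (hzero.mono fun t ht => ht.ge)
  obtain ⟨δ, hδ, hsub⟩ := mem_nhdsGT_iff_exists_Ioo_subset.1 (hcont.and hne)
  have hsame : ∀ x ∈ Ioo a δ, ∀ y ∈ Ioo a δ, p x < 0 → p y ≤ 0 := by
    intro x hx y hy hpx
    by_contra! hpy
    obtain ⟨z, hz, hpz⟩ := isPreconnected_Ioo.intermediate_value hx hy
      (fun t ht => (hsub ht).1.continuousWithinAt) ⟨hpx.le, hpy.le⟩
    exact (hsub hz).2 hpz
  by_cases hneg : ∃ x ∈ Ioo a δ, p x < 0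
  · obtain ⟨x, hx, hpx⟩ := hneg
    exact Or.inr (mem_of_superset (Ioo_mem_nhdsGT hδ) fun y hy => hsame x hx y hy hpx)
  · push Not at hneg
    exact Or.inl (mem_of_superset (Ioo_mem_nhdsGT hδ) hneg)

theorem eventually_nhdsGT_zero_of_eventually_nhdsLT {E : Type*} [NormedAddCommGroup E]
    {γ γr : ℝ → E} {L r₀ : ℝ} (hr₀ : 0 < r₀)
    (hcont : ContinuousOn γ (Ico 0 L)) (hne : ∀ s ∈ Ico 0 L, γ s ≠ 0)
    (hmem : ∀ r ∈ Ioo 0 r₀, ∃ s ∈ Ico 0 L, γr r = γ s) (hnorm : ∀ r ∈ Ioo 0 r₀, ‖γr r‖ = r)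
    {p : E → Prop} (hp : ∀ᶠ s in 𝓝[<] L, p (γ s)) : ∀ᶠ r in 𝓝[>] 0, p (γr r) := by
  obtain ⟨c, hcL, hc⟩ := mem_nhdsLT_iff_exists_Ioo_subset.1 hp
  -- `‖γ‖` has a positive minimum `m` on `[0, c]`, so `‖γ s‖ < m` forces `s ∈ (c, L)`.
  have hIcc : Icc 0 c ⊆ Ico 0 L := fun s hs => ⟨hs.1, hs.2.trans_lt hcL⟩
  obtain ⟨m, hm, hmle⟩ := isCompact_Icc.exists_forall_le' (hcont.mono hIcc).norm
    fun s hs => norm_pos_iff.2 (hne s (hIcc hs))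
  filter_upwards [Ioo_mem_nhdsGT (lt_min hm hr₀)] with r hr
  have hr₀' : r ∈ Ioo 0 r₀ := ⟨hr.1, hr.2.trans_le (min_le_right _ _)⟩
  obtain ⟨s, hs, hγs⟩ := hmem r hr₀'
  rw [hγs]
  refine hc ⟨?_, hs.2⟩
  by_contra! hsc
  have := hmle s ⟨hs.1, hsc⟩
  rw [← hγs, hnorm r hr₀'] at this
  linarith [hr.2, min_le_left m r₀]

noncomputable section

section NormedSpace

variable {E G H : Type*} [NormedAddCommGroup E] [NormedSpace ℝ E]
  [NormedAddCommGroup G] [NormedSpace ℝ G] [NormedAddCommGroup H] [NormedSpace ℝ H]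
  {s : Set E}

theorem AnalyticOnNhd.clm_apply {A : E → G →L[ℝ] H} {w : E → G} (hA : AnalyticOnNhd ℝ A s)
    (hw : AnalyticOnNhd ℝ w s) : AnalyticOnNhd ℝ (fun y => A y (w y)) s := fun x hx =>
  ((ContinuousLinearMap.apply ℝ H).analyticAt_bilinear (w x, A x)).comp₂ (hw x hx) (hA x hx)

def divDerivNumerator (X : E → E) (α β : E → ℝ) (y : E) : ℝ :=
  β y * fderiv ℝ α y (X y) - α y * fderiv ℝ β y (X y)

theorem AnalyticOnNhd.divDerivNumerator {X : E → E} {α β : E → ℝ}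
    (hX : AnalyticOnNhd ℝ X s) (hα : AnalyticOnNhd ℝ α s) (hβ : AnalyticOnNhd ℝ β s) :
    AnalyticOnNhd ℝ (divDerivNumerator X α β) s :=
  (hβ.mul (hα.fderiv.clm_apply hX)).sub (hα.mul (hβ.fderiv.clm_apply hX))

theorem hasDerivAt_div_comp_of_hasDerivAt_smul {γ : ℝ → E} {X : E → E} {α β : E → ℝ}
    {k r : ℝ} (hγ : HasDerivAt γ (k • X (γ r)) r) (hα : DifferentiableAt ℝ α (γ r))
    (hβ : DifferentiableAt ℝ β (γ r)) (hβ0 : β (γ r) ≠ 0) :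
    HasDerivAt (fun t => α (γ t) / β (γ t))
      (k * divDerivNumerator X α β (γ r) / β (γ r) ^ 2) r := by
  have hcomp : ∀ φ : E → ℝ, DifferentiableAt ℝ φ (γ r) →
      HasDerivAt (fun t => φ (γ t)) (k * fderiv ℝ φ (γ r) (X (γ r))) r := fun φ hφ => by
    have h := hφ.hasFDerivAt.comp_hasDerivAt r hγ
    rw [map_smul, smul_eq_mul] at h
    exact h
  refine ((hcomp α hα).fun_div (hcomp β hβ) hβ0).congr_deriv ?_
  rw [divDerivNumerator]
  ring

end NormedSpace

section InnerProductSpace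

variable {E : Type*} [NormedAddCommGroup E] [InnerProductSpace ℝ E] {s : Set E}

theorem AnalyticOnNhd.inner {u w : E → E} (hu : AnalyticOnNhd ℝ u s)
    (hw : AnalyticOnNhd ℝ w s) : AnalyticOnNhd ℝ (fun y => ⟪u y, w y⟫) s := fun x hx =>
  ((innerSL ℝ (E := E)).analyticAt_bilinear (u x, w x)).comp₂ (hu x hx) (hw x hx)

theorem AnalyticOnNhd.gradient [CompleteSpace E] {f : E → ℝ} (hf : AnalyticOnNhd ℝ f s) :
    AnalyticOnNhd ℝ (gradient f) s :=
  (InnerProductSpace.toDual ℝ E).symm.toContinuousLinearEquiv.toContinuousLinearMap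
    |>.comp_analyticOnNhd hf.fderiv

def radialDerivNum (X : E → E) (α β : E → ℝ) (y : E) : ℝ :=
  ⟪y, y⟫ * divDerivNumerator X α β y

def radialDerivDen (X : E → E) (β : E → ℝ) (y : E) : ℝ :=
  β y ^ 2 * ⟪X y, y⟫

theorem AnalyticOnNhd.radialDerivNum {X : E → E} {α β : E → ℝ}
    (hX : AnalyticOnNhd ℝ X s) (hα : AnalyticOnNhd ℝ α s) (hβ : AnalyticOnNhd ℝ β s) :
    AnalyticOnNhd ℝ (radialDerivNum X α β) s :=
  (analyticOnNhd_id.inner analyticOnNhd_id).mul (hX.divDerivNumerator hα hβ)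

theorem AnalyticOnNhd.radialDerivDen {X : E → E} {β : E → ℝ}
    (hX : AnalyticOnNhd ℝ X s) (hβ : AnalyticOnNhd ℝ β s) :
    AnalyticOnNhd ℝ (radialDerivDen X β) s :=
  (hβ.pow 2).mul (hX.inner analyticOnNhd_id)

theorem hasDerivAt_div_comp_of_radial {γ : ℝ → E} {X : E → E} {α β : E → ℝ} {r : ℝ}
    (hγ : HasDerivAt γ ((r / ⟪X (γ r), γ r⟫) • X (γ r)) r) (hnorm : ‖γ r‖ = r)
    (hα : DifferentiableAt ℝ α (γ r)) (hβ : DifferentiableAt ℝ β (γ r)) (hβ0 : β (γ r) ≠ 0) :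
    HasDerivAt (fun t => α (γ t) / β (γ t))
      (radialDerivNum X α β (γ r) / radialDerivDen X β (γ r) / r) r := by
  convert hasDerivAt_div_comp_of_hasDerivAt_smul hγ hα hβ hβ0 using 1
  -- when `r = 0` or `⟪X (γ r), γ r⟫ = 0` both sides are `0` by division by zero
  rw [radialDerivNum, radialDerivDen, real_inner_self_eq_norm_sq, hnorm]
  rcases eq_or_ne r 0 with rfl | hr
  · simp
  rcases eq_or_ne ⟪X (γ r), γ r⟫ 0 with hX | hX
  · simp [hX]
  field_simp

theorem norm_div_inner_smul_inv_norm_smul (g x : E) :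
    (‖g‖ / ⟪g, ‖x‖⁻¹ • x⟫) • (‖g‖⁻¹ • g) = (‖x‖ / ⟪g, x⟫) • g := by
  rcases eq_or_ne g 0 with rfl | hg
  · simp
  rw [real_inner_smul_right, smul_smul]
  congr 1
  rcases eq_or_ne x 0 with rfl | hx
  · simp
  have := norm_ne_zero_iff.2 hg
  have := norm_ne_zero_iff.2 hx
  field_simp

theorem tendsto_mul_deriv_div_comp_of_radial {U : Set E} {X : E → E} (hX : AnalyticOnNhd ℝ X U)
    {γ : ℝ → E} {r₀ M : ℝ} (hr₀ : 0 < r₀)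
    (hγ : ∀ r ∈ Ioo 0 r₀, γ r ∈ U ∧ ‖γ r‖ = r ∧
      HasDerivAt γ ((r / ⟪X (γ r), γ r⟫) • X (γ r)) r ∧ ⟪X (γ r), γ r⟫ ≠ 0)
    (hosc : ∀ g : E → ℝ, AnalyticOnNhd ℝ g U →
      (∀ᶠ r in 𝓝[>] 0, g (γ r) = 0) ∨ ∀ᶠ r in 𝓝[>] 0, g (γ r) ≠ 0)
    {α β : E → ℝ} (hα : AnalyticOnNhd ℝ α U) (hβ : AnalyticOnNhd ℝ β U)
    (hβ0 : ∀ r ∈ Ioo 0 r₀, β (γ r) ≠ 0) (hbdd : ∀ r ∈ Ioo 0 r₀, |α (γ r) / β (γ r)| ≤ M) :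
    Tendsto (fun r => r * deriv (fun r' => α (γ r') / β (γ r')) r) (𝓝[>] 0) (𝓝 0) := by
  set N := radialDerivNum X α β
  set D := radialDerivDen X β
  have hN : AnalyticOnNhd ℝ N U := hX.radialDerivNum hα hβ
  have hD : AnalyticOnNhd ℝ D U := hX.radialDerivDen hβ
  -- an analytic function with the sign of `radialDerivNum X N D / radialDerivDen X D`
  have hP : AnalyticOnNhd ℝ (fun y => radialDerivNum X N D y * radialDerivDen X D y) U :=
    (hX.radialDerivNum hN hD).mul (hX.radialDerivDen hD)
  have hI : Ioo 0 r₀ ∈ 𝓝[>] (0 : ℝ) := Ioo_mem_nhdsGT hr₀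
  have hderiv : ∀ {φ ψ : E → ℝ}, AnalyticOnNhd ℝ φ U → AnalyticOnNhd ℝ ψ U →
      (∀ r ∈ Ioo 0 r₀, ψ (γ r) ≠ 0) → ∀ᶠ r in 𝓝[>] 0, HasDerivAt (fun t => φ (γ t) / ψ (γ t))
        (radialDerivNum X φ ψ (γ r) / radialDerivDen X ψ (γ r) / r) r := by
    intro φ ψ hφ hψ hψ0
    filter_upwards [hI] with r hr
    obtain ⟨hU, hnorm, hvel, -⟩ := hγ r hr
    exact hasDerivAt_div_comp_of_radial hvel hnorm (hφ _ hU).differentiableAt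
      (hψ _ hU).differentiableAt (hψ0 r hr)
  have hsign := eventually_nonneg_or_nonpos_of_continuousAt (mem_of_superset hI fun r hr =>
    (hP _ (hγ r hr).1).continuousAt.comp (hγ r hr).2.2.1.continuousAt) (hosc _ hP)
  refine tendsto_mul_deriv_nhdsGT_zero_of_eventually_deriv_sign (hderiv hα hβ hβ0)
    (mem_of_superset hI hbdd) (q := fun r => N (γ r) / D (γ r)) ?_
    (hderiv hN hD fun r hr => mul_ne_zero (pow_ne_zero 2 (hβ0 r hr)) (hγ r hr).2.2.2)
    (hsign.imp (fun h => ?_) (fun h => ?_))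
  · filter_upwards [hI] with r hr
    exact (mul_div_cancel₀ _ hr.1.ne').symm
  all_goals filter_upwards [h, hI] with r hr hr₀
  · exact div_nonneg (div_nonneg_iff.2 (mul_nonneg_iff.1 hr)) hr₀.1.le
  · exact div_nonpos_of_nonpos_of_nonneg (div_nonpos_iff.2 (mul_nonpos_iff.1 hr)) hr₀.1.le

end InnerProductSpace

end

theorem r_mul_deriv_tendsto_zero_along_reparameterized_trajectory
    {n : ℕ}
    (U : Set (EuclideanSpace ℝ (Fin n)))
    (hOU : (0 : EuclideanSpace ℝ (Fin n)) ∈ U)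
    (f : EuclideanSpace ℝ (Fin n) → ℝ)
    (hfan : AnalyticOnNhd ℝ f U) (hgf0 : gradient f 0 = 0)
    (L : ℝ)
    (γ : ℝ → EuclideanSpace ℝ (Fin n))
    (hγU : ∀ s ∈ Set.Ico (0 : ℝ) L, γ s ∈ U)
    (hγreg : ∀ s ∈ Set.Ico (0 : ℝ) L, gradient f (γ s) ≠ 0)
    (hγode : ∀ s ∈ Set.Ico (0 : ℝ) L,
      HasDerivAt γ (‖gradient f (γ s)‖⁻¹ • gradient f (γ s)) s)
    (hosc : ∀ g : EuclideanSpace ℝ (Fin n) → ℝ, AnalyticAt ℝ g 0 →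
      (∀ᶠ s in 𝓝[<] L, g (γ s) = 0) ∨ (∀ᶠ s in 𝓝[<] L, g (γ s) ≠ 0))
    (r₀ : ℝ) (hr₀ : 0 < r₀)
    (γr : ℝ → EuclideanSpace ℝ (Fin n))
    (hγr_mem : ∀ r ∈ Set.Ioo (0 : ℝ) r₀, ∃ s ∈ Set.Ico (0 : ℝ) L, γr r = γ s)
    (hγr_norm : ∀ r ∈ Set.Ioo (0 : ℝ) r₀, ‖γr r‖ = r)
    (hγr' : ∀ r ∈ Set.Ioo (0 : ℝ) r₀,
      HasDerivAt γr
        ((‖gradient f (γr r)‖ / ⟪gradient f (γr r), ‖γr r‖⁻¹ • γr r⟫) •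
          (‖gradient f (γr r)‖⁻¹ • gradient f (γr r))) r)
    (a b : EuclideanSpace ℝ (Fin n) → ℝ)
    (ha : AnalyticOnNhd ℝ a U) (hb : AnalyticOnNhd ℝ b U)
    (hbne : ∀ r ∈ Set.Ioo (0 : ℝ) r₀, b (γr r) ≠ 0)
    (hrad : ∀ r ∈ Set.Ioo (0 : ℝ) r₀, ⟪gradient f (γr r), γr r⟫ ≠ 0)
    (hbound : ∃ M : ℝ, ∀ r ∈ Set.Ioo (0 : ℝ) r₀, |a (γr r) / b (γr r)| ≤ M) :
    Tendsto (fun r => r * deriv (fun r' => a (γr r') / b (γr r')) r)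
      (𝓝[>] (0 : ℝ)) (𝓝 0) := by
  obtain ⟨M, hM⟩ := hbound
  have hγcont : ContinuousOn γ (Ico 0 L) := fun s hs =>
    (hγode s hs).continuousAt.continuousWithinAt
  have hγne : ∀ s ∈ Ico 0 L, γ s ≠ 0 := fun s hs h0 => hγreg s hs (by rw [h0, hgf0])
  have hlift := fun p => eventually_nhdsGT_zero_of_eventually_nhdsLT (p := p) hr₀ hγcont hγne
    hγr_mem hγr_norm
  refine tendsto_mul_deriv_div_comp_of_radial hfan.gradient hr₀ (fun r hr => ?_)
    (fun g hg => (hosc g (hg 0 hOU)).imp (hlift (g · = 0)) (hlift (g · ≠ 0))) ha hb hbne hM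
  obtain ⟨s, hs, hγs⟩ := hγr_mem r hr
  refine ⟨hγs ▸ hγU s hs, hγr_norm r hr, ?_, hrad r hr⟩
  have hvel := hγr' r hr
  rwa [norm_div_inner_smul_inv_norm_smul, hγr_norm r hr] at hvel
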